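/- Consider a direct-mapped (r = 0) 32 KB VIVT cache with 64-byte lines and page size 4 KB. Suppose the cache is homonym-free: there is a partial function φ from resident virtual addresses to physical addresses with V mod 2^12 = φ(V) mod 2^12 for all resident V. Then for any physical address P, the set of resident virtual line addresses V with φ(V) aligned to the same line as P (φ(V)/2^6 = P/2^6) has cardinality at most 8, and each such V is determined uniquely by (V / 2^12) mod 8 together with P. -/

import Mathlib

/-!
A line-aligned virtual address and its physical image agree on their page offset, so every
resident whose image lies in the line of `P` has the page offset of that line. The 9-bit line
index of a virtual address consists of the 6 line bits of its page offset followed by the 3 low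
bits of its page number; with the offset fixed, those 3 bits therefore determine the line index,
which in turn determines the resident. Hence at most `2^3 = 8` such residents.
-/

namespace Nat

theorem mod_eq_div_mul_mod_of_div_eq {L S V W P : ℕ} (hLS : L ∣ S) (hV : V % L = 0)
    (hVW : V % S = W % S) (hWP : W / L = P / L) : V % S = P / L * L % S := by
  have hW : W % L = 0 := by
    rw [← Nat.mod_mod_of_dvd W hLS, ← hVW, Nat.mod_mod_of_dvd V hLS, hV]
  have hW' : W = P / L * L := by
    rw [← hWP, Nat.div_mul_cancel (Nat.dvd_of_mod_eq_zero hW)]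
  rw [hVW, hW']

theorem div_mod_mul_eq_of_mod_eq_of_div_mod_eq {L M N V V' : ℕ}
    (hoff : V % (L * M) = V' % (L * M)) (hpage : V / (L * M) % N = V' / (L * M) % N) :
    V / L % (M * N) = V' / L % (M * N) := by
  rw [Nat.mod_mul, Nat.mod_mul, ← Nat.mod_mul_right_div_self V, ← Nat.mod_mul_right_div_self V',
    Nat.div_div_eq_div_mul V, Nat.div_div_eq_div_mul V', hoff, hpage]

end Nat

theorem stmt7_general (R : Finset ℕ) (φ : ℕ → ℕ)
    (hline : ∀ V ∈ R, V % 2^6 = 0)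
    (hinj : Set.InjOn (fun V => (V / 2^6) % 2^9) R)
    (hφ : ∀ V ∈ R, V % 2^12 = φ V % 2^12)
    (P : ℕ) :
    (R.filter (fun V => φ V / 2^6 = P / 2^6)).card ≤ 8 ∧
      Set.InjOn (fun V => (V / 2^12) % 8)
        (R.filter (fun V => φ V / 2^6 = P / 2^6)) := by
  set S := R.filter (fun V => φ V / 2^6 = P / 2^6)
  have hoff : ∀ V ∈ S, V % 2^12 = P / 2^6 * 2^6 % 2^12 := fun V hV ↦ by
    obtain ⟨hVR, hVP⟩ := Finset.mem_filter.1 hV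
    exact Nat.mod_eq_div_mul_mod_of_div_eq (pow_dvd_pow 2 (by norm_num)) (hline V hVR)
      (hφ V hVR) hVP
  have hpage : Set.InjOn (fun V => (V / 2^12) % 8) S := by
    intro V hV V' hV' hVV'
    refine hinj (Finset.mem_filter.1 hV).1 (Finset.mem_filter.1 hV').1 ?_
    exact Nat.div_mod_mul_eq_of_mod_eq_of_div_mod_eq (L := 2^6) (M := 2^6) (N := 8)
      ((hoff V hV).trans (hoff V' hV').symm) hVV'
  refine ⟨?_, hpage⟩
  calc S.card ≤ (Finset.range 8).card :=
        Finset.card_le_card_of_injOn _ (fun V _ ↦ Finset.mem_range.2 (Nat.mod_lt _ (by norm_num)))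
          hpage
    _ = 8 := Finset.card_range 8

/-- Homonym-free direct-mapped 32 KB VIVT cache with 64-byte lines and 4 KB
pages: `R` is the set of resident virtual line addresses (injective line
index), `φ` maps residents to physical addresses preserving intra-page
offsets.  For any physical address `P`, the set of residents whose image is
aligned to the same line as `P` has at most 8 elements, and each such `V`
is uniquely determined by `(V / 2^12) % 8` together with `P`. -/
theorem stmt7 (R : Finset ℕ) (φ : ℕ → ℕ)
    (hbound : ∀ V ∈ R, V < 2^32)
    (hline : ∀ V ∈ R, V % 2^6 = 0)
    (hinj : Set.InjOn (fun V => (V / 2^6) % 2^9) R)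
    (hφ : ∀ V ∈ R, V % 2^12 = φ V % 2^12)
    (P : ℕ) :
    (R.filter (fun V => φ V / 2^6 = P / 2^6)).card ≤ 8 ∧
      Set.InjOn (fun V => (V / 2^12) % 8)
        (R.filter (fun V => φ V / 2^6 = P / 2^6)) :=
  stmt7_general R φ hline hinj hφ P
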